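/- arXiv:2312.17519 — 2 statements merged into one kernel-verified Lean document; each statement's English description precedes it below -/
import Mathlib

section
/- If e ∈ E is a loop of the set system D = (E, Φ) (i.e., e belongs to no admissible set), then the two-variable interlace polynomial satisfies L̄_D(x, y) = (1 + x y) · L̄_{D\e}(x, y), where D\e = (E \ {e}, Φ). -/
open Finset

/-- Distance from a subset `U` to a nonempty set system `Φ`. -/
def setSystemDist {α : Type*} [DecidableEq α] (Φ : Finset (Finset α)) (hΦ : Φ.Nonempty)
    (U : Finset α) : ℕ :=
  Φ.inf' hΦ fun φ => (symmDiff U φ).card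

/-! Adding a loop `e` to `U` moves `U` one step further from every admissible set, hence from
`Φ`. Splitting the subsets of `E` by whether they contain `e` then factors out `1 + x y`. -/

section

variable {α : Type*} [DecidableEq α]

theorem Finset.insert_symmDiff_of_notMem {e : α} {U V : Finset α} (hV : e ∉ V) :
    symmDiff (insert e U) V = insert e (symmDiff U V) := by
  ext a
  by_cases ha : a = e
  · subst ha
    simp [mem_symmDiff, hV]
  · simp [mem_symmDiff, ha]

theorem setSystemDist_insert_of_loop (Φ : Finset (Finset α)) (hΦ : Φ.Nonempty) {e : α}
    (hloop : ∀ φ ∈ Φ, e ∉ φ) {U : Finset α} (heU : e ∉ U) :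
    setSystemDist Φ hΦ (insert e U) = setSystemDist Φ hΦ U + 1 := by
  have hcard : ∀ φ ∈ Φ, (symmDiff (insert e U) φ).card = (symmDiff U φ).card + 1 := by
    intro φ hφ
    rw [insert_symmDiff_of_notMem (hloop φ hφ), card_insert_of_notMem]
    simp [mem_symmDiff, heU, hloop φ hφ]
  rw [setSystemDist, setSystemDist, inf'_congr hΦ rfl hcard,
    apply_inf'_eq_inf'_comp hΦ (· + 1) fun a b => (Nat.add_min_add_right a b 1).symm]
  rfl

end

theorem interlaceTwo_loop_general {α : Type*} [DecidableEq α] (E : Finset α)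
    (Φ : Finset (Finset α)) (hΦ : Φ.Nonempty)
    (e : α) (he : e ∈ E) (hloop : ∀ φ ∈ Φ, e ∉ φ) (x y : ℤ) :
    ∑ U ∈ E.powerset, x ^ U.card * y ^ setSystemDist Φ hΦ U
      = (1 + x * y) *
          ∑ U ∈ (E.erase e).powerset, x ^ U.card * y ^ setSystemDist Φ hΦ U := by
  have he' : e ∉ E.erase e := notMem_erase e E
  have hwith_e : ∑ U ∈ (E.erase e).powerset,
      x ^ (insert e U).card * y ^ setSystemDist Φ hΦ (insert e U)
      = x * y * ∑ U ∈ (E.erase e).powerset, x ^ U.card * y ^ setSystemDist Φ hΦ U := by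
    rw [mul_sum]
    refine sum_congr rfl fun U hU => ?_
    have heU : e ∉ U := fun h => he' (mem_powerset.mp hU h)
    rw [card_insert_of_notMem heU, setSystemDist_insert_of_loop Φ hΦ hloop heU]
    ring
  rw [← insert_erase he, sum_powerset_insert he', hwith_e, erase_insert he']
  ring

/-- If `e` is a loop of the set system `D = (E, Φ)` (it belongs to no admissible set),
then `L̄_D(x, y) = (1 + x·y) · L̄_{D\e}(x, y)`, where `D\e = (E \ {e}, Φ)`. -/
theorem interlaceTwo_loop {α : Type*} [DecidableEq α] (E : Finset α)
    (Φ : Finset (Finset α)) (hΦ : Φ.Nonempty) (hsub : ∀ φ ∈ Φ, φ ⊆ E)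
    (e : α) (he : e ∈ E) (hloop : ∀ φ ∈ Φ, e ∉ φ) (x y : ℤ) :
    ∑ U ∈ E.powerset, x ^ U.card * y ^ setSystemDist Φ hΦ U
      = (1 + x * y) *
          ∑ U ∈ (E.erase e).powerset, x ^ U.card * y ^ setSystemDist Φ hΦ U :=
  interlaceTwo_loop_general E Φ hΦ e he hloop x y
end

section
/- If e ∈ E is a coloop of the set system D = (E, Φ) (i.e., e belongs to every admissible set), then the two-variable interlace polynomial satisfies L̄_D(x, y) = (x + y) · L̄_{D*e\e}(x, y), where D*e\e is the set system on E\{e} whose admissible sets are {φ \ {e} : φ ∈ Φ}. -/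
open Finset

/-!
Split the subsets of `E` according to whether they contain the coloop `e`. Since `e` lies in
every admissible set, for `U ⊆ E \ {e}` we have `|U Δ φ| = |U Δ (φ \ {e})| + 1` and
`|(U ∪ {e}) Δ φ| = |U Δ (φ \ {e})|`, so the two halves of the sum contribute the factors `y`
and `x` respectively.
-/

section Coloop

variable {α : Type*} [DecidableEq α] {U φ : Finset α} {e : α}

lemma symmDiff_eq_insert_symmDiff_erase (heU : e ∉ U) (heφ : e ∈ φ) :
    symmDiff U φ = insert e (symmDiff U (φ.erase e)) := by
  ext a
  by_cases ha : a = e <;> simp [mem_symmDiff, ha, heU, heφ]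

lemma symmDiff_insert_eq_symmDiff_erase (heU : e ∉ U) (heφ : e ∈ φ) :
    symmDiff (insert e U) φ = symmDiff U (φ.erase e) := by
  ext a
  by_cases ha : a = e <;> simp [mem_symmDiff, ha, heU, heφ]

lemma card_symmDiff_eq_card_symmDiff_erase_add_one (heU : e ∉ U) (heφ : e ∈ φ) :
    #(symmDiff U φ) = #(symmDiff U (φ.erase e)) + 1 := by
  rw [symmDiff_eq_insert_symmDiff_erase heU heφ, card_insert_of_notMem]
  simp [mem_symmDiff, heU]

variable {Φ : Finset (Finset α)} (hΦ : Φ.Nonempty)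

lemma setSystemDist_image {β : Type*} (f : β → Finset α) {Ψ : Finset β} (hΨ : Ψ.Nonempty)
    (U : Finset α) :
    setSystemDist (Ψ.image f) (hΨ.image f) U = Ψ.inf' hΨ fun ψ => #(symmDiff U (f ψ)) := by
  simp [setSystemDist, inf'_image]

lemma setSystemDist_eq_setSystemDist_erase_add_one (hcoloop : ∀ φ ∈ Φ, e ∈ φ) (heU : e ∉ U) :
    setSystemDist Φ hΦ U
      = setSystemDist (Φ.image fun φ => φ.erase e) (hΦ.image _) U + 1 := by
  rw [setSystemDist_image _ hΦ, setSystemDist,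
    apply_inf'_eq_inf'_comp (g := (· + 1)) hΦ fun a b => (min_add_add_right a b 1).symm]
  exact inf'_congr hΦ rfl fun φ hφ =>
    card_symmDiff_eq_card_symmDiff_erase_add_one heU (hcoloop φ hφ)

lemma setSystemDist_insert_eq_setSystemDist_erase (hcoloop : ∀ φ ∈ Φ, e ∈ φ) (heU : e ∉ U) :
    setSystemDist Φ hΦ (insert e U)
      = setSystemDist (Φ.image fun φ => φ.erase e) (hΦ.image _) U := by
  rw [setSystemDist_image _ hΦ, setSystemDist]
  exact inf'_congr hΦ rfl fun φ hφ => by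
    rw [symmDiff_insert_eq_symmDiff_erase heU (hcoloop φ hφ)]

end Coloop

theorem interlaceTwo_coloop_general {α : Type*} [DecidableEq α] (E : Finset α)
    (Φ : Finset (Finset α)) (hΦ : Φ.Nonempty)
    (e : α) (he : e ∈ E) (hcoloop : ∀ φ ∈ Φ, e ∈ φ) (x y : ℤ) :
    ∑ U ∈ E.powerset, x ^ U.card * y ^ setSystemDist Φ hΦ U
      = (x + y) *
          ∑ U ∈ (E.erase e).powerset,
            x ^ U.card * y ^ setSystemDist (Φ.image fun φ => φ.erase e) (hΦ.image _) U := by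
  have heU : ∀ U ∈ (E.erase e).powerset, e ∉ U := fun U hU h =>
    notMem_erase e E (mem_powerset.mp hU h)
  rw [← insert_erase he, sum_powerset_insert (notMem_erase e E), erase_insert_eq_erase,
    erase_idem, add_mul, add_comm (x * _), mul_sum, mul_sum]
  congr 1 <;> refine sum_congr rfl fun U hU => ?_
  · rw [setSystemDist_eq_setSystemDist_erase_add_one hΦ hcoloop (heU U hU)]
    ring
  · rw [setSystemDist_insert_eq_setSystemDist_erase hΦ hcoloop (heU U hU),
      card_insert_of_notMem (heU U hU)]
    ring

/-- If `e` is a coloop of the set system `D = (E, Φ)` (it belongs to every admissible set),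
then `L̄_D(x, y) = (x + y) · L̄_{D*e\e}(x, y)`, where `D*e\e` is the set system on
`E \ {e}` with admissible sets `{φ \ {e} : φ ∈ Φ}`. -/
theorem interlaceTwo_coloop {α : Type*} [DecidableEq α] (E : Finset α)
    (Φ : Finset (Finset α)) (hΦ : Φ.Nonempty) (hsub : ∀ φ ∈ Φ, φ ⊆ E)
    (e : α) (he : e ∈ E) (hcoloop : ∀ φ ∈ Φ, e ∈ φ) (x y : ℤ) :
    ∑ U ∈ E.powerset, x ^ U.card * y ^ setSystemDist Φ hΦ U
      = (x + y) *
          ∑ U ∈ (E.erase e).powerset,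
            x ^ U.card * y ^ setSystemDist (Φ.image fun φ => φ.erase e) (hΦ.image _) U :=
  interlaceTwo_coloop_general E Φ hΦ e he hcoloop x y
end
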